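/- arXiv:2510.25292 — 3 statements merged into one kernel-verified Lean document; each statement's English description precedes it below -/
import Mathlib

section
/- For fixed sizes (n₁, n₂, …, n_ℓ) with each nᵢ > 1, if a nonzero binary matrix A ∈ {0,1}^{n×n} (where n = n₁n₂⋯n_ℓ) admits two Kronecker factorizations A = A₁ ⊗ A₂ ⊗ ⋯ ⊗ A_ℓ = Â₁ ⊗ Â₂ ⊗ ⋯ ⊗ Â_ℓ with Aᵢ, Âᵢ ∈ {0,1}^{nᵢ×nᵢ}, then Aᵢ = Âᵢ for all i = 1, …, ℓ. -/
namespace KronPaper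

/-- Kronecker product of square binary (Bool-valued) matrices. -/
def kron {m n : ℕ} (A : Matrix (Fin m) (Fin m) Bool) (B : Matrix (Fin n) (Fin n) Bool) :
    Matrix (Fin (m * n)) (Fin (m * n)) Bool :=
  Matrix.of fun i j => by
    have hn : 0 < n := by
      rcases Nat.eq_zero_or_pos n with h | h
      · exact absurd i.isLt (by simp [h])
      · exact h
    exact
      A ⟨i.val / n, Nat.div_lt_of_lt_mul (lt_of_lt_of_eq i.isLt (mul_comm m n))⟩
        ⟨j.val / n, Nat.div_lt_of_lt_mul (lt_of_lt_of_eq j.isLt (mul_comm m n))⟩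
      && B ⟨i.val % n, Nat.mod_lt _ hn⟩ ⟨j.val % n, Nat.mod_lt _ hn⟩

/-- Cast a square matrix along an equality of sizes. -/
def castK {m n : ℕ} (h : m = n) (M : Matrix (Fin m) (Fin m) Bool) :
    Matrix (Fin n) (Fin n) Bool :=
  Matrix.reindex (finCongr h) (finCongr h) M

/-- Iterated Kronecker product of a list of square binary matrices. -/
def kronList : (ns : List ℕ) →
    ((i : Fin ns.length) → Matrix (Fin (ns.get i)) (Fin (ns.get i)) Bool) →
    Matrix (Fin ns.prod) (Fin ns.prod) Bool
  | [], _ => Matrix.of fun _ _ => true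
  | _ :: ns, F => kron (F ⟨0, Nat.succ_pos _⟩) (kronList ns fun i => F i.succ)


/-- Square binary matrices of size `n`. -/
abbrev BMat (n : ℕ) := Matrix (Fin n) (Fin n) Bool

theorem kron_apply {m n : ℕ} (A : BMat m) (B : BMat n) (i j : Fin (m * n)) :
    kron A B i j = (A i.divNat j.divNat && B i.modNat j.modNat) :=
  rfl

theorem kron_apply_finProdFinEquiv {m n : ℕ} (A : BMat m) (B : BMat n) (a b : Fin m)
    (p q : Fin n) :
    kron A B (finProdFinEquiv (a, p)) (finProdFinEquiv (b, q)) = (A a b && B p q) := by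
  have hsplit (x : Fin m × Fin n) :
      (finProdFinEquiv x).divNat = x.1 ∧ (finProdFinEquiv x).modNat = x.2 :=
    Prod.ext_iff.mp (finProdFinEquiv.symm_apply_apply x)
  simp only [kron_apply, hsplit]

/-- A `true` entry of `kron A B` makes the corresponding entries of `A` and `B` true, and the
slices of `kron A B` through it then recover `A` and `B`. -/
theorem kron_injective_of_apply_eq_true {m n : ℕ} {A A' : BMat m} {B B' : BMat n}
    {i j : Fin (m * n)} (hAB : kron A B i j = true) (h : kron A B = kron A' B') :
    A = A' ∧ B = B' := by
  have hentry (a b : Fin m) (p q : Fin n) : (A a b && B p q) = (A' a b && B' p q) := by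
    simpa only [kron_apply_finProdFinEquiv] using
      congrFun₂ h (finProdFinEquiv (a, p)) (finProdFinEquiv (b, q))
  obtain ⟨hA, hB⟩ : A i.divNat j.divNat = true ∧ B i.modNat j.modNat = true :=
    Bool.and_eq_true_iff.mp hAB
  obtain ⟨hA', hB'⟩ : A' i.divNat j.divNat = true ∧ B' i.modNat j.modNat = true := by
    simpa [hA, hB] using (hentry i.divNat j.divNat i.modNat j.modNat).symm
  constructor
  · ext a b
    simpa [hB, hB'] using hentry a b i.modNat j.modNat
  · ext p q
    simpa [hA, hA'] using hentry i.divNat j.divNat p q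

theorem uniqueness_of_factorization_general (ns : List ℕ)
    (F G : (i : Fin ns.length) → BMat (ns.get i))
    (hnz : ∃ i j, kronList ns F i j = true)
    (h : kronList ns F = kronList ns G) :
    F = G := by
  induction ns with
  | nil => funext i; exact i.elim0
  | cons n l ih =>
    obtain ⟨i, j, hij⟩ := hnz
    obtain ⟨hhead, htail⟩ := kron_injective_of_apply_eq_true hij h
    have htail_nz : kronList l (fun k => F k.succ) i.modNat j.modNat = true :=
      (Bool.and_eq_true_iff.mp hij).2
    have htail_eq := ih (fun k => F k.succ) (fun k => G k.succ) ⟨_, _, htail_nz⟩ htail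
    funext k
    cases k using Fin.cases with
    | zero => exact hhead
    | succ k => exact congrFun htail_eq k

/-- uniqueness of a Kronecker factorization of a nonzero binary
matrix with fixed factor sizes `(n₁, …, n_ℓ)`. -/
theorem uniqueness_of_factorization (ns : List ℕ) (hns : ∀ i : Fin ns.length, 1 < ns.get i)
    (F G : (i : Fin ns.length) → BMat (ns.get i))
    (hnz : ∃ i j, kronList ns F i j = true)
    (h : kronList ns F = kronList ns G) :
    F = G :=
  uniqueness_of_factorization_general ns F G hnz h

end KronPaper
end

section
/- Let A ∈ {0,1}^{n×n}, let p > 1 be an integer, and let l₁,…,l_q > 1 and r₁,…,r_s > 1 be integers with n = (∏ lᵢ) · p · (∏ rⱼ). Then A admits both an (l₁,…,l_q, p·∏rⱼ) factorization and a ((∏lᵢ)·p, r₁,…,r_s) factorization if and only if A admits an (l₁,…,l_q, p, r₁,…,r_s) factorization. -/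
/-!
Indexing `Fin (m * n)` by `Fin m × Fin n` through `finProdFinEquiv`, the entries of `kron A B`
are `A i j && B k l`. Now let `A = B ⊗ C = D ⊗ E`, where `B` is the `(l₁, …, l_q)`-factor, `E` the
`(r₁, …, r_s)`-factor, `C` has size `p·∏rⱼ` and `D` has size `(∏lᵢ)·p`. If `B i j = true`, comparing
the `(i, j)` blocks gives `C = P ⊗ E` with `P` the `(i, j)` block of `D`; if `B = 0`, then
`B ⊗ C = B ⊗ (P ⊗ E)` for any `P`. Either way `A = B ⊗ P ⊗ E`. The converse is associativity.
-/

namespace KronPaper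

lemma castK_apply {m n : ℕ} (h : m = n) (M : BMat m) (i j : Fin n) :
    castK h M i j = M (Fin.cast h.symm i) (Fin.cast h.symm j) := rfl

lemma castK_self {n : ℕ} (h : n = n) (M : BMat n) : castK h M = M := rfl

lemma castK_castK {m n k : ℕ} (h₁ : m = n) (h₂ : n = k) (M : BMat m) :
    castK h₂ (castK h₁ M) = castK (h₁.trans h₂) M := by
  subst h₁ h₂; rfl

lemma kron_finProdFinEquiv {m n : ℕ} (A : BMat m) (B : BMat n) (i j : Fin m) (k l : Fin n) :
    kron A B (finProdFinEquiv (i, k)) (finProdFinEquiv (j, l)) = (A i j && B k l) := by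
  have h := fun x : Fin m × Fin n => finProdFinEquiv.symm_apply_apply x
  simp only [finProdFinEquiv_symm_apply, Prod.ext_iff] at h
  exact congrArg₂ (· && ·) (congrArg₂ A (h (i, k)).1 (h (j, l)).1)
    (congrArg₂ B (h (i, k)).2 (h (j, l)).2)

lemma ext_finProdFinEquiv {m n : ℕ} {M N : BMat (m * n)}
    (h : ∀ i j k l, M (finProdFinEquiv (i, k)) (finProdFinEquiv (j, l)) =
      N (finProdFinEquiv (i, k)) (finProdFinEquiv (j, l))) : M = N := by
  ext x y
  obtain ⟨⟨i, k⟩, rfl⟩ := finProdFinEquiv.surjective x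
  obtain ⟨⟨j, l⟩, rfl⟩ := finProdFinEquiv.surjective y
  exact h i j k l

lemma cast_finProdFinEquiv_assoc {a b c : ℕ} (h : a * (b * c) = a * b * c) (i : Fin a)
    (j : Fin b) (k : Fin c) : Fin.cast h (finProdFinEquiv (i, finProdFinEquiv (j, k))) =
      finProdFinEquiv (finProdFinEquiv (i, j), k) := by
  ext; simp only [Fin.val_cast, finProdFinEquiv_apply_val]; ring

lemma kron_assoc {a b c : ℕ} (A : BMat a) (B : BMat b) (C : BMat c) :
    castK (mul_assoc a b c) (kron (kron A B) C) = kron A (kron B C) := by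
  refine ext_finProdFinEquiv fun i j x y => ?_
  obtain ⟨⟨k, l⟩, rfl⟩ := finProdFinEquiv.surjective x
  obtain ⟨⟨k', l'⟩, rfl⟩ := finProdFinEquiv.surjective y
  simp only [castK_apply, cast_finProdFinEquiv_assoc, kron_finProdFinEquiv, Bool.and_assoc]

lemma castK_kron_ones_left {n : ℕ} (C : BMat n) :
    castK (one_mul n) (kron (Matrix.of fun _ _ => true) C) = C := by
  ext x y
  have e : ∀ x : Fin n, Fin.cast (one_mul n).symm x = finProdFinEquiv (0, x) := fun x => by
    ext; simp
  rw [castK_apply, e, e, kron_finProdFinEquiv]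
  simp

lemma castK_kron_ones_right {m : ℕ} (A : BMat m) :
    castK (mul_one m) (kron A (Matrix.of fun _ _ => true)) = A := by
  ext x y
  have e : ∀ x : Fin m, Fin.cast (mul_one m).symm x = finProdFinEquiv (x, 0) := fun x => by
    ext; simp
  rw [castK_apply, e, e, kron_finProdFinEquiv]
  simp

/-- The size `n` is left free, so that a matrix whose size is only propositionally `ns.prod`
can be factorized without first being cast. -/
def KronFactorizable (ns : List ℕ) {n : ℕ} (A : BMat n) : Prop :=
  ∃ (h : ns.prod = n) (F : (i : Fin ns.length) → BMat (ns.get i)), castK h (kronList ns F) = A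

namespace KronFactorizable

lemma prod_eq {ns : List ℕ} {n : ℕ} {A : BMat n} (hA : KronFactorizable ns A) : ns.prod = n :=
  hA.fst

lemma iff_exists_eq_castK {ns : List ℕ} {n : ℕ} (h : ns.prod = n) (A : BMat n) :
    KronFactorizable ns A ↔ ∃ F, A = castK h (kronList ns F) :=
  ⟨fun ⟨_, F, hF⟩ => ⟨F, hF.symm⟩, fun ⟨F, hF⟩ => ⟨h, F, hF.symm⟩⟩

lemma iff_exists_eq {ns : List ℕ} (A : BMat ns.prod) :
    KronFactorizable ns A ↔ ∃ F, A = kronList ns F :=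
  iff_exists_eq_castK rfl A

lemma nil_iff {n : ℕ} (A : BMat n) :
    KronFactorizable [] A ↔ ∃ h : 1 = n, castK h (Matrix.of fun _ _ => true) = A :=
  ⟨fun ⟨h, _, hA⟩ => ⟨h, hA⟩, fun ⟨h, hA⟩ => ⟨h, fun i => i.elim0, hA⟩⟩

lemma cons_iff {m : ℕ} {ns : List ℕ} {n : ℕ} (A : BMat n) :
    KronFactorizable (m :: ns) A ↔ ∃ (B : BMat m) (k : ℕ) (C : BMat k),
      KronFactorizable ns C ∧ ∃ h : m * k = n, castK h (kron B C) = A := by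
  constructor
  · rintro ⟨h, F, rfl⟩
    exact ⟨F 0, _, kronList ns (fun i => F i.succ), ⟨rfl, _, rfl⟩, h, rfl⟩
  · rintro ⟨B, k, C, ⟨rfl, G, rfl⟩, h, rfl⟩
    exact ⟨h, Fin.cons (α := fun i => BMat ((m :: ns).get i)) B G, rfl⟩

lemma singleton_iff {m n : ℕ} (A : BMat n) : KronFactorizable [m] A ↔ m = n := by
  refine ⟨fun hA => by simpa using hA.prod_eq, fun h => ?_⟩
  subst h
  exact ⟨mul_one m, Fin.cons (α := fun i => BMat ([m].get i)) A fun i => i.elim0,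
    castK_kron_ones_right A⟩

lemma append_iff {L₁ L₂ : List ℕ} {n : ℕ} (A : BMat n) :
    KronFactorizable (L₁ ++ L₂) A ↔ ∃ (m k : ℕ) (B : BMat m) (C : BMat k),
      KronFactorizable L₁ B ∧ KronFactorizable L₂ C ∧ ∃ h : m * k = n, castK h (kron B C) = A := by
  induction L₁ generalizing n with
  | nil =>
    constructor
    · intro hA
      exact ⟨1, n, _, A, (nil_iff _).2 ⟨rfl, rfl⟩, hA, one_mul n, castK_kron_ones_left A⟩
    · rintro ⟨m, k, B, C, hB, ⟨rfl, G, rfl⟩, h, rfl⟩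
      obtain ⟨rfl, rfl⟩ := (nil_iff B).1 hB
      refine ⟨by simpa using h, G, ?_⟩
      change castK _ (kronList L₂ G) = _
      conv_lhs => rw [← castK_kron_ones_left (kronList L₂ G), castK_castK]
      rfl
  | cons x T ih =>
    constructor
    · intro hA
      obtain ⟨B₀, k₀, C₀, hC₀, h₀, rfl⟩ := (cons_iff A).1 hA
      obtain ⟨m₁, k₁, B₁, C₁, hB₁, hC₁, rfl, rfl⟩ := (ih C₀).1 hC₀
      refine ⟨x * m₁, k₁, kron B₀ B₁, C₁, (cons_iff _).2 ⟨B₀, m₁, B₁, hB₁, rfl, rfl⟩, hC₁,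
        (mul_assoc _ _ _).trans h₀, ?_⟩
      rw [castK_self, ← kron_assoc, castK_castK]
    · rintro ⟨m, k, B, C, hB, hC, h, rfl⟩
      obtain ⟨B₀, k₀, B₁, hB₁, rfl, rfl⟩ := (cons_iff B).1 hB
      refine (cons_iff _).2 ⟨B₀, k₀ * k, kron B₁ C, (ih _).2 ⟨_, _, B₁, C, hB₁, hC, rfl, rfl⟩,
        (mul_assoc _ _ _).symm.trans h, ?_⟩
      rw [← kron_assoc, castK_castK]; rfl

end KronFactorizable

lemma exists_eq_kron_of_castK_kron_eq {a p b n : ℕ} {B : BMat a} {C : BMat (p * b)}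
    {D : BMat (a * p)} {E : BMat b} (h₁ : a * (p * b) = n) (h₂ : a * p * b = n)
    (h : castK h₁ (kron B C) = castK h₂ (kron D E)) {i j : Fin a} (hB : B i j = true) :
    ∃ P : BMat p, C = kron P E := by
  subst h₁
  refine ⟨Matrix.of fun y y' => D (finProdFinEquiv (i, y)) (finProdFinEquiv (j, y')), ?_⟩
  refine ext_finProdFinEquiv fun y y' z z' => ?_
  have hyz := congrFun₂ h (finProdFinEquiv (i, finProdFinEquiv (y, z)))
    (finProdFinEquiv (j, finProdFinEquiv (y', z')))
  simpa [castK_apply, cast_finProdFinEquiv_assoc, kron_finProdFinEquiv, hB] using hyz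

lemma exists_kron_eq_kron_kron {a p b n : ℕ} {B : BMat a} {C : BMat (p * b)}
    {D : BMat (a * p)} {E : BMat b} (h₁ : a * (p * b) = n) (h₂ : a * p * b = n)
    (h : castK h₁ (kron B C) = castK h₂ (kron D E)) :
    ∃ P : BMat p, kron B C = kron B (kron P E) := by
  by_cases hB : ∃ i j, B i j = true
  · obtain ⟨i, j, hij⟩ := hB
    obtain ⟨P, rfl⟩ := exists_eq_kron_of_castK_kron_eq h₁ h₂ h hij
    exact ⟨P, rfl⟩
  · refine ⟨Matrix.of fun _ _ => false, ext_finProdFinEquiv fun i j _ _ => ?_⟩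
    have hij : B i j = false := by simpa using fun hij => hB ⟨i, j, hij⟩
    simp [kron_finProdFinEquiv, hij]

/-- `A` admits both an `(l₁, …, l_q, p·∏rⱼ)` and a `((∏lᵢ)·p, r₁, …, r_s)`
factorization iff it admits an `(l₁, …, l_q, p, r₁, …, r_s)` factorization. -/
theorem combined_factorizations (L R : List ℕ) (p : ℕ)
    (A : BMat ((L ++ p :: R).prod)) :
    ((∃ F, A = castK (show (L ++ [p * R.prod]).prod = (L ++ p :: R).prod by
          simp [List.prod_append, mul_assoc]) (kronList (L ++ [p * R.prod]) F)) ∧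
     (∃ G, A = castK (show ((L.prod * p) :: R).prod = (L ++ p :: R).prod by
          simp [List.prod_append, mul_assoc]) (kronList ((L.prod * p) :: R) G))) ↔
      ∃ H, A = kronList (L ++ p :: R) H := by
  open KronFactorizable in
  rw [← iff_exists_eq_castK, ← iff_exists_eq_castK, ← iff_exists_eq]
  constructor
  · rintro ⟨hLeft, hRight⟩
    obtain ⟨_, _, B, C, hB, hC, h₁, rfl⟩ := (append_iff _).1 hLeft
    obtain rfl := (singleton_iff C).1 hC
    obtain ⟨D, _, E, hE, h₂, hDE⟩ := (cons_iff _).1 hRight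
    obtain rfl := hB.prod_eq
    obtain rfl := hE.prod_eq
    obtain ⟨P, hP⟩ := exists_kron_eq_kron_kron h₁ h₂ hDE.symm
    rw [hP]
    exact (append_iff _).2 ⟨_, _, B, kron P E, hB, (cons_iff _).2 ⟨P, _, E, hE, rfl, rfl⟩, h₁, rfl⟩
  · intro hA
    obtain ⟨_, _, B, C, hB, hC, h, rfl⟩ := (append_iff _).1 hA
    obtain ⟨P, _, E, hE, rfl, rfl⟩ := (cons_iff C).1 hC
    obtain rfl := hB.prod_eq
    obtain rfl := hE.prod_eq
    refine ⟨(append_iff _).2 ⟨_, _, B, _, hB, (singleton_iff _).2 rfl, h, rfl⟩,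
      (cons_iff _).2 ⟨kron B P, _, E, hE, (mul_assoc _ _ _).trans h, ?_⟩⟩
    rw [castK_self, ← kron_assoc, castK_castK]

end KronPaper
end

section
/- Let A ∈ {0,1}^{n×n} be a decomposable maximal matrix and n = ∏_{j=1}^m p_j^{k_j} the prime factorization of n. Then A admits an (n₁,…,n_ℓ) Kronecker factorization where ℓ = Σ_{j=1}^m k_j and each nᵢ is a prime number; moreover the multiset {n₁,…,n_ℓ} contains each prime p_j exactly k_j times. -/
/-!
If `A = P ⊗ Q` and `P a b = 1`, then `Q` is the `(a, b)` block of `A`. Splitting a maximal `A`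
as `R ⊗ S` with sizes `(p q₁, q₂)` then exhibits that block as `R' ⊗ S`, so the right factor
of a maximal matrix is again maximal; if `P = 0`, the right factor may be replaced by `0`,
which is trivially maximal. Peeling off one prime factor at a time therefore factors `A`
along the prime factorisation of `n`.
-/

namespace KronPaper

def IsMaximal {n : ℕ} (A : BMat n) : Prop :=
  ∀ p q, 1 < p → 1 < q → ∀ h : p * q = n, ∃ (P : BMat p) (Q : BMat q), A = castK h (kron P Q)

/-- `blockEquiv h (a, r)` is the index of block `a`, offset `r`, in the layout of `kron`. -/
def blockEquiv {p q n : ℕ} (h : p * q = n) : Fin p × Fin q ≃ Fin n :=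
  finProdFinEquiv.trans (finCongr h)

@[simp]
lemma val_blockEquiv {p q n : ℕ} (h : p * q = n) (x : Fin p × Fin q) :
    (blockEquiv h x).val = x.2 + q * x.1 := rfl

lemma castK_kron_blockEquiv {p q n : ℕ} (h : p * q = n) (P : BMat p) (Q : BMat q)
    (a b : Fin p) (r s : Fin q) :
    castK h (kron P Q) (blockEquiv h (a, r)) (blockEquiv h (b, s)) = (P a b && Q r s) := by
  have hq : 0 < q := r.pos
  simp only [castK, kron, Matrix.reindex_apply, Matrix.submatrix_apply, Matrix.of_apply]
  congr 2 <;> ext <;> simp [Nat.add_mul_div_left, Nat.div_eq_of_lt, Nat.mod_eq_of_lt, hq]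

lemma eq_castK_kron_iff {p q n : ℕ} (h : p * q = n) (A : BMat n) (P : BMat p) (Q : BMat q) :
    A = castK h (kron P Q) ↔
      ∀ a b r s, A (blockEquiv h (a, r)) (blockEquiv h (b, s)) = (P a b && Q r s) := by
  refine ⟨fun hA a b r s => hA ▸ castK_kron_blockEquiv h P Q a b r s, fun hA => ?_⟩
  ext i j
  obtain ⟨⟨a, r⟩, rfl⟩ := (blockEquiv h).surjective i
  obtain ⟨⟨b, s⟩, rfl⟩ := (blockEquiv h).surjective j
  rw [hA, castK_kron_blockEquiv]

lemma blockEquiv_mul_assoc {p q₁ q₂ n : ℕ} (h : p * (q₁ * q₂) = n) (h' : p * q₁ * q₂ = n)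
    (a : Fin p) (u : Fin q₁) (t : Fin q₂) :
    blockEquiv h (a, blockEquiv rfl (u, t)) = blockEquiv h' (blockEquiv rfl (a, u), t) := by
  ext; simp only [val_blockEquiv]; ring

lemma IsMaximal.of_castK_kron {p q n : ℕ} {A : BMat n} (hA : IsMaximal A) {h : p * q = n}
    {P : BMat p} {Q : BMat q} (hPQ : A = castK h (kron P Q)) {a b : Fin p} (hab : P a b = true) :
    IsMaximal Q := by
  intro q₁ q₂ hq₁ hq₂ h₁₂
  subst h₁₂
  have hpq₁ : 1 < p * q₁ := lt_of_lt_of_le hq₁ (Nat.le_mul_of_pos_left q₁ a.pos)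
  obtain ⟨R, S, hRS⟩ := hA (p * q₁) q₂ hpq₁ hq₂ (by rw [mul_assoc, h])
  refine ⟨fun u v => R (blockEquiv rfl (a, u)) (blockEquiv rfl (b, v)), S, ?_⟩
  refine (eq_castK_kron_iff rfl Q _ S).2 fun u v t w => ?_
  rw [← Bool.true_and (Q _ _), ← hab, ← (eq_castK_kron_iff h A P Q).1 hPQ,
    blockEquiv_mul_assoc h (by rw [mul_assoc, h]), blockEquiv_mul_assoc h (by rw [mul_assoc, h]),
    (eq_castK_kron_iff _ A R S).1 hRS]

lemma isMaximal_const_false (n : ℕ) : IsMaximal (fun _ _ => false : BMat n) := fun _ _ _ _ h =>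
  ⟨fun _ _ => false, fun _ _ => false, (eq_castK_kron_iff h _ _ _).2 fun _ _ _ _ => rfl⟩

lemma IsMaximal.exists_castK_kron_isMaximal {n : ℕ} {A : BMat n} (hA : IsMaximal A) {p q : ℕ}
    (hp : 1 < p) (hq : 1 < q) (h : p * q = n) :
    ∃ (P : BMat p) (Q : BMat q), A = castK h (kron P Q) ∧ IsMaximal Q := by
  obtain ⟨P, Q, hPQ⟩ := hA p q hp hq h
  by_cases hP : ∃ a b, P a b = true
  · obtain ⟨a, b, hab⟩ := hP
    exact ⟨P, Q, hPQ, hA.of_castK_kron hPQ hab⟩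
  · simp only [not_exists, Bool.not_eq_true] at hP
    refine ⟨P, fun _ _ => false, (eq_castK_kron_iff h A P _).2 fun a b r s => ?_,
      isMaximal_const_false q⟩
    rw [(eq_castK_kron_iff h A P Q).1 hPQ, hP a b, Bool.false_and, Bool.false_and]

lemma castK_kron_castK {m k q n : ℕ} (h : m * q = n) (h' : k = q) (h'' : m * k = n) (P : BMat m)
    (M : BMat k) : castK h (kron P (castK h' M)) = castK h'' (kron P M) := by
  subst h'; rfl

lemma exists_castK_kronList_singleton {m n : ℕ} (A : BMat n) (h : [m].prod = n) :
    ∃ F, A = castK h (kronList [m] F) := by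
  have hm : m = n := by simpa using h
  refine ⟨Fin.cons (castK hm.symm A) finZeroElim, (eq_castK_kron_iff h A _ _).2 fun a b r s => ?_⟩
  obtain rfl := Subsingleton.elim (α := Fin 1) r 0
  obtain rfl := Subsingleton.elim (α := Fin 1) s 0
  show _ = (A _ _ && true)
  rw [Bool.and_true]
  congr 1 <;> ext <;> exact (zero_add _).trans (one_mul _)

lemma IsMaximal.exists_castK_kronList {ns : List ℕ} (hne : ns ≠ []) (hns : ∀ m ∈ ns, 1 < m) :
    ∀ {n : ℕ} {A : BMat n}, IsMaximal A → ∀ h : ns.prod = n, ∃ F, A = castK h (kronList ns F) := by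
  induction ns with
  | nil => exact absurd rfl hne
  | cons m ns ih =>
    intro n A hA h
    rcases eq_or_ne ns [] with rfl | hne'
    · exact exists_castK_kronList_singleton A h
    have hns' : ∀ k ∈ ns, 1 < k := fun k hk => hns k (List.mem_cons_of_mem m hk)
    obtain ⟨P, Q, hPQ, hQ⟩ := hA.exists_castK_kron_isMaximal (hns m List.mem_cons_self)
      (ns.one_lt_prod_of_one_lt hns' hne') (by rwa [← List.prod_cons])
    obtain ⟨G, hG⟩ := ih hne' hns' hQ rfl
    exact ⟨Fin.cons P G, by rw [hPQ, hG]; exact castK_kron_castK _ _ h P _⟩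

/-- a decomposable maximal matrix admits a factorization of length
`Ω(n) = Σ kⱼ` whose factor sizes are primes, each prime `pⱼ` occurring exactly `kⱼ`
times (i.e. the list of sizes is a permutation of the prime factors of `n`). -/
theorem maximal_matrix_prime_factorization (n : ℕ) (A : BMat n)
    (hdec : ∃ p q, 1 < p ∧ 1 < q ∧
        ∃ (h : p * q = n) (P : BMat p) (Q : BMat q), A = castK h (kron P Q))
    (hmax : ∀ p q, 1 < p → 1 < q → ∀ h : p * q = n,
        ∃ (P : BMat p) (Q : BMat q), A = castK h (kron P Q)) :
    ∃ ns : List ℕ,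
      (∀ p ∈ ns, p.Prime) ∧
      ns.length = n.primeFactorsList.length ∧
      List.Perm ns n.primeFactorsList ∧
      ∃ (h : ns.prod = n) (F : (i : Fin ns.length) → BMat (ns.get i)),
        A = castK h (kronList ns F) := by
  obtain ⟨p, q, hp, hq, h, -⟩ := hdec
  have hn : 1 < n := by subst h; nlinarith
  have hprod : n.primeFactorsList.prod = n := Nat.prod_primeFactorsList (by omega)
  have hne : n.primeFactorsList ≠ [] := by rw [Ne, Nat.primeFactorsList_eq_nil]; omega
  obtain ⟨F, hF⟩ := IsMaximal.exists_castK_kronList hne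
    (fun _ hm => (Nat.prime_of_mem_primeFactorsList hm).one_lt) hmax hprod
  exact ⟨_, fun _ => Nat.prime_of_mem_primeFactorsList, rfl, List.Perm.refl _, hprod, F, hF⟩

end KronPaper
end
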